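/- Fix L ≥ 2 and let E = ZMod L × ZMod L × Fin 2 index the edges of the L×L torus grid, where (a,b,0) is the horizontal edge joining vertex (a,b) to (a+1,b) and (a,b,1) is the vertical edge joining (a,b) to (a,b+1); the star of vertex (a,b) is {(a,b,0), (a−1,b,0), (a,b,1), (a,b−1,1)} and the boundary of plaquette (a,b) is {(a,b,0), (a,b+1,0), (a,b,1), (a+1,b,1)}. Let H be a complex inner product space and A : E → Fin 2 → (H →ₗ[ℂ] H) with each A e x self-adjoint, (A e x) ∘ (A e x) = id, and A e x commuting with A e' y whenever e ≠ e'. Fix j = (0,0,0) and define X'_e = A e 0 and Z'_e = A e 1 for e ≠ j, X'_j = (A j 0 + A j 1)/√2, Z'_j = (A j 0 − A j 1)/√2; for each vertex w set S'_v(w) = ∏_{e ∈ star(w)} X'_e and for each plaquette f set S'_p(f) = ∏_{e ∈ boundary(f)} Z'_e (the factors commute, so the products are well-defined), and let B = ∑_w S'_v(w) + ∑_f S'_p(f). Then the operator identity (2L²) • id − B = (1/2) ∑_w (id − S'_v(w))² + (1/2) ∑_f (id − S'_p(f))² holds, and consequently re⟪φ, B φ⟫ ≤ 2L² · ‖φ‖²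 for every φ ∈ H; i.e. the maximal quantum value of the toric-code Bell expression I_N^tor is β_q^tor(N) = N = 2L². -/

import Mathlib

/-!
The effective observables square to the identity except at the reference edge `j`, where
`X'_j² = 1 + ½{A_j⁰, A_j¹}` and `Z'_j² = 1 − ½{A_j⁰, A_j¹}`. The four edges of a star or of a
plaquette are distinct, so their observables commute and `S'²` is the product of the four
squares, in which `j` occurs at most once. As `j` lies in exactly two stars and two plaquettes,
`∑ S'_v² + ∑ S'_p² = 2L²` with the anticommutators cancelling, and expanding
`(1 − S)² = 1 − 2S + S²` gives the sum-of-squares identity. Each `(1 − S)²` is positive because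
`S` is self-adjoint, which gives the bound.
-/

noncomputable section

open scoped InnerProductSpace

namespace ToricBell

variable {H : Type*} [NormedAddCommGroup H] [InnerProductSpace ℂ H] {L : ℕ}

/-- The edges of the `L × L` torus grid: `(a, b, 0)` is the horizontal edge joining `(a, b)`
to `(a+1, b)` and `(a, b, 1)` is the vertical edge joining `(a, b)` to `(a, b+1)`. -/
abbrev Edge (L : ℕ) : Type := ZMod L × ZMod L × Fin 2

/-- The reference edge `j = (0, 0, 0)`. -/
def j0 (L : ℕ) : Edge L := (0, 0, 0)

/-- The effective `X` observable at each edge (the reference edge plays the special role). -/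
def Xe (A : Edge L → Fin 2 → Module.End ℂ H) (e : Edge L) : Module.End ℂ H :=
  if e = j0 L then (Real.sqrt 2 : ℂ)⁻¹ • (A (j0 L) 0 + A (j0 L) 1) else A e 0

/-- The effective `Z` observable at each edge (the reference edge plays the special role). -/
def Ze (A : Edge L → Fin 2 → Module.End ℂ H) (e : Edge L) : Module.End ℂ H :=
  if e = j0 L then (Real.sqrt 2 : ℂ)⁻¹ • (A (j0 L) 0 - A (j0 L) 1) else A e 1

/-- The (effective) vertex operator `S'_v(a,b)`: the product of the effective `X` observables
over the star `{(a,b,0), (a−1,b,0), (a,b,1), (a,b−1,1)}` of the vertex `(a,b)`. -/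
def Sv (A : Edge L → Fin 2 → Module.End ℂ H) (w : ZMod L × ZMod L) : Module.End ℂ H :=
  Xe A (w.1, w.2, 0) * Xe A (w.1 - 1, w.2, 0) * Xe A (w.1, w.2, 1) * Xe A (w.1, w.2 - 1, 1)

/-- The (effective) plaquette operator `S'_p(a,b)`: the product of the effective `Z` observables
over the boundary `{(a,b,0), (a,b+1,0), (a,b,1), (a+1,b,1)}` of the plaquette `(a,b)`. -/
def Sp (A : Edge L → Fin 2 → Module.End ℂ H) (w : ZMod L × ZMod L) : Module.End ℂ H :=
  Ze A (w.1, w.2, 0) * Ze A (w.1, w.2 + 1, 0) * Ze A (w.1, w.2, 1) * Ze A (w.1 + 1, w.2, 1)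

/-- The toric-code Bell operator `B = ∑_w S'_v(w) + ∑_f S'_p(f)`. -/
def Bell [NeZero L] (A : Edge L → Fin 2 → Module.End ℂ H) : Module.End ℂ H :=
  (∑ w : ZMod L × ZMod L, Sv A w) + ∑ w : ZMod L × ZMod L, Sp A w

end ToricBell

theorem Fintype.sum_one_sub_sq {ι R : Type*} [Fintype ι] [Ring R] (S : ι → R) :
    ∑ i, (1 - S i) ^ 2 = Fintype.card ι • 1 + ∑ i, S i ^ 2 - 2 • ∑ i, S i := by
  have h (a : R) : (1 - a) ^ 2 = 1 + a ^ 2 - 2 • a := by noncomm_ring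
  simp only [h, Finset.sum_sub_distrib, Finset.sum_add_distrib, Finset.sum_const,
    Finset.card_univ, Finset.smul_sum]

theorem Fintype.sum_ite_eq_of_injective {α β M : Type*} [Fintype α] [DecidableEq β]
    [AddCommMonoid M] {f : α → β} (hf : f.Injective) {v : α} {j : β} (hv : f v = j) (x : M) :
    ∑ w, (if f w = j then x else 0) = x := by
  subst hv
  classical
  simp [hf.eq_iff]

section FourCommuting

variable {M E : Type*} {T : E → M} {a b c d : E}

theorem sq_mul_mul_mul_of_pairwise_commute [Monoid M]
    (hT : Pairwise fun e e' => Commute (T e) (T e')) (h : [a, b, c, d].Nodup) :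
    (T a * T b * T c * T d) ^ 2 = T a ^ 2 * T b ^ 2 * T c ^ 2 * T d ^ 2 := by
  simp only [List.nodup_cons, List.mem_cons, List.not_mem_nil, or_false, not_or] at h
  obtain ⟨⟨hab, hac, had⟩, ⟨hbc, hbd⟩, hcd, -⟩ := h
  rw [(((hT had).mul_left (hT hbd)).mul_left (hT hcd)).mul_pow,
    ((hT hac).mul_left (hT hbc)).mul_pow, (hT hab).mul_pow]

theorem sq_mul_mul_mul_eq_one_add_ite [Ring M] [DecidableEq E] {j : E} {x : M}
    (hT : Pairwise fun e e' => Commute (T e) (T e'))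
    (hsq : ∀ e, T e ^ 2 = 1 + if e = j then x else 0)
    (h : [a, b, c, d].Nodup) (hc : c ≠ j) (hd : d ≠ j) :
    (T a * T b * T c * T d) ^ 2 = 1 + (if a = j then x else 0) + if b = j then x else 0 := by
  have hab : a ≠ b := by simp_all
  have hdefect : ((if a = j then x else 0) * if b = j then x else 0) = 0 := by
    rcases eq_or_ne a j with rfl | haj
    · rw [if_neg hab.symm, mul_zero]
    · rw [if_neg haj, zero_mul]
  rw [sq_mul_mul_mul_of_pairwise_commute hT h, hsq, hsq, hsq, hsq, if_neg hc, if_neg hd,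
    add_zero, mul_one, mul_one, add_mul, mul_add, mul_add, hdefect]
  noncomm_ring

theorem LinearMap.isSymmetric_mul_mul_mul_of_pairwise_commute {𝕜 V : Type*} [RCLike 𝕜]
    [NormedAddCommGroup V] [InnerProductSpace 𝕜 V] {T : E → V →ₗ[𝕜] V}
    (hT : Pairwise fun e e' => Commute (T e) (T e')) (hS : ∀ e, (T e).IsSymmetric)
    (h : [a, b, c, d].Nodup) : (T a * T b * T c * T d).IsSymmetric := by
  simp only [List.nodup_cons, List.mem_cons, List.not_mem_nil, or_false, not_or] at h
  obtain ⟨⟨hab, hac, had⟩, ⟨hbc, hbd⟩, hcd, -⟩ := h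
  exact (((hS a).mul_of_commute (hS b) (hT hab)).mul_of_commute (hS c)
    ((hT hac).mul_left (hT hbc))).mul_of_commute (hS d)
    (((hT had).mul_left (hT hbd)).mul_left (hT hcd))

end FourCommuting

section Positivity

variable {𝕜 V : Type*} [RCLike 𝕜] [NormedAddCommGroup V] [InnerProductSpace 𝕜 V]

theorem LinearMap.IsSymmetric.isPositive_sq {T : V →ₗ[𝕜] V} (hT : T.IsSymmetric) :
    (T ^ 2).IsPositive :=
  ⟨hT.pow 2, fun x => by rw [sq, Module.End.mul_apply, hT]; exact inner_self_nonneg⟩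

theorem LinearMap.isPositive_sum_one_sub_sq {ι : Type*} (s : Finset ι) {S : ι → V →ₗ[𝕜] V}
    (hS : ∀ i, (S i).IsSymmetric) : (∑ i ∈ s, (1 - S i) ^ 2).IsPositive :=
  isPositive_sum s fun i _ => (IsSymmetric.one.sub (hS i)).isPositive_sq

theorem LinearMap.IsPositive.re_inner_le {T : V →ₗ[𝕜] V} {c : ℝ}
    (h : ((c : 𝕜) • 1 - T).IsPositive) (x : V) : RCLike.re ⟪x, T x⟫_𝕜 ≤ c * ‖x‖ ^ 2 := by
  have := h.re_inner_nonneg_right x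
  rw [sub_apply, inner_sub_right, smul_apply, Module.End.one_apply, inner_smul_right, map_sub,
    RCLike.re_ofReal_mul, inner_self_eq_norm_sq] at this
  linarith

end Positivity

namespace ToricBell

variable {H : Type*} [NormedAddCommGroup H] [InnerProductSpace ℂ H] {L : ℕ}

def halfAnticomm (A : Edge L → Fin 2 → Module.End ℂ H) : Module.End ℂ H :=
  (2 : ℂ)⁻¹ • (A (j0 L) 0 * A (j0 L) 1 + A (j0 L) 1 * A (j0 L) 0)

section Observables

variable (A : Edge L → Fin 2 → Module.End ℂ H)

theorem Xe_commute (hcomm : ∀ e e' x y, e ≠ e' → Commute (A e x) (A e' y)) :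
    Pairwise fun e e' => Commute (Xe A e) (Xe A e') := by
  intro e e' hne
  have h x y := hcomm e e' x y hne
  unfold Xe
  split_ifs with he he' he'
  · exact absurd (he.trans he'.symm) hne
  · subst he
    exact ((h 0 0).add_left (h 1 0)).smul_left _
  · subst he'
    exact ((h 0 0).add_right (h 0 1)).smul_right _
  · exact h 0 0

theorem Ze_commute (hcomm : ∀ e e' x y, e ≠ e' → Commute (A e x) (A e' y)) :
    Pairwise fun e e' => Commute (Ze A e) (Ze A e') := by
  intro e e' hne
  have h x y := hcomm e e' x y hne
  unfold Ze
  split_ifs with he he' he'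
  · exact absurd (he.trans he'.symm) hne
  · subst he
    exact ((h 0 1).sub_left (h 1 1)).smul_left _
  · subst he'
    exact ((h 1 0).sub_right (h 1 1)).smul_right _
  · exact h 1 1

theorem isSymmetric_Xe (hsa : ∀ e x, (A e x).IsSymmetric) (e : Edge L) :
    (Xe A e).IsSymmetric := by
  unfold Xe
  split_ifs
  · exact ((hsa _ 0).add (hsa _ 1)).smul (by simp)
  · exact hsa e 0

theorem isSymmetric_Ze (hsa : ∀ e x, (A e x).IsSymmetric) (e : Edge L) :
    (Ze A e).IsSymmetric := by
  unfold Ze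
  split_ifs
  · exact ((hsa _ 0).sub (hsa _ 1)).smul (by simp)
  · exact hsa e 1

theorem inv_sqrt_two_sq : ((Real.sqrt 2 : ℂ)⁻¹) ^ 2 = (2 : ℂ)⁻¹ := by
  rw [inv_pow, ← Complex.ofReal_pow, Real.sq_sqrt zero_le_two, Complex.ofReal_ofNat]

theorem Xe_sq (hsq : ∀ e x, A e x * A e x = 1) (e : Edge L) :
    Xe A e ^ 2 = 1 + if e = j0 L then halfAnticomm A else 0 := by
  unfold Xe halfAnticomm
  split_ifs
  · rw [smul_pow, inv_sqrt_two_sq, sq, add_mul, mul_add, mul_add, hsq, hsq]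
    module
  · rw [sq, hsq, add_zero]

theorem Ze_sq (hsq : ∀ e x, A e x * A e x = 1) (e : Edge L) :
    Ze A e ^ 2 = 1 + if e = j0 L then -halfAnticomm A else 0 := by
  unfold Ze halfAnticomm
  split_ifs
  · rw [smul_pow, inv_sqrt_two_sq, sq, sub_mul, mul_sub, mul_sub, hsq, hsq]
    module
  · rw [sq, hsq, add_zero]

end Observables

theorem vertical_ne_j0 (a b : ZMod L) : ((a, b, 1) : Edge L) ≠ j0 L := by
  simp [j0]

theorem card_vertices [NeZero L] : Fintype.card (ZMod L × ZMod L) = L ^ 2 := by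
  simp [ZMod.card, sq]

section Torus

variable [Fact (1 < L)]

theorem star_nodup (w : ZMod L × ZMod L) :
    [((w.1, w.2, 0) : Edge L), (w.1 - 1, w.2, 0), (w.1, w.2, 1), (w.1, w.2 - 1, 1)].Nodup := by
  simp [eq_sub_iff_add_eq]

theorem boundary_nodup (w : ZMod L × ZMod L) :
    [((w.1, w.2, 0) : Edge L), (w.1, w.2 + 1, 0), (w.1, w.2, 1), (w.1 + 1, w.2, 1)].Nodup := by
  simp

variable (A : Edge L → Fin 2 → Module.End ℂ H)
  (hcomm : ∀ e e' x y, e ≠ e' → Commute (A e x) (A e' y))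
include hcomm

theorem isSymmetric_Sv (hsa : ∀ e x, (A e x).IsSymmetric) (w : ZMod L × ZMod L) :
    (Sv A w).IsSymmetric :=
  LinearMap.isSymmetric_mul_mul_mul_of_pairwise_commute (Xe_commute A hcomm)
    (isSymmetric_Xe A hsa) (star_nodup w)

theorem isSymmetric_Sp (hsa : ∀ e x, (A e x).IsSymmetric) (w : ZMod L × ZMod L) :
    (Sp A w).IsSymmetric :=
  LinearMap.isSymmetric_mul_mul_mul_of_pairwise_commute (Ze_commute A hcomm)
    (isSymmetric_Ze A hsa) (boundary_nodup w)

variable [NeZero L] (hsq : ∀ e x, A e x * A e x = 1)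
include hsq

theorem sum_Sv_sq : ∑ w : ZMod L × ZMod L, Sv A w ^ 2 = L ^ 2 • 1 + 2 • halfAnticomm A := by
  have hSv (w : ZMod L × ZMod L) : Sv A w ^ 2 =
      1 + (if ((w.1, w.2, 0) : Edge L) = j0 L then halfAnticomm A else 0) +
        if ((w.1 - 1, w.2, 0) : Edge L) = j0 L then halfAnticomm A else 0 :=
    sq_mul_mul_mul_eq_one_add_ite (Xe_commute A hcomm) (Xe_sq A hsq) (star_nodup w)
      (vertical_ne_j0 _ _) (vertical_ne_j0 _ _)
  have h₁ : ∑ w : ZMod L × ZMod L,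
      (if ((w.1, w.2, 0) : Edge L) = j0 L then halfAnticomm A else 0) = halfAnticomm A :=
    Fintype.sum_ite_eq_of_injective (v := (0, 0))
      (fun w w' h => by simpa [Prod.ext_iff] using h) rfl _
  have h₂ : ∑ w : ZMod L × ZMod L,
      (if ((w.1 - 1, w.2, 0) : Edge L) = j0 L then halfAnticomm A else 0) = halfAnticomm A :=
    Fintype.sum_ite_eq_of_injective (v := (1, 0))
      (fun w w' h => by simpa [Prod.ext_iff] using h) (by simp [j0]) _
  rw [Finset.sum_congr rfl fun w _ => hSv w, Finset.sum_add_distrib, Finset.sum_add_distrib,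
    h₁, h₂, Finset.sum_const, Finset.card_univ, card_vertices]
  abel

theorem sum_Sp_sq : ∑ w : ZMod L × ZMod L, Sp A w ^ 2 = L ^ 2 • 1 - 2 • halfAnticomm A := by
  have hSp (w : ZMod L × ZMod L) : Sp A w ^ 2 =
      1 + (if ((w.1, w.2, 0) : Edge L) = j0 L then -halfAnticomm A else 0) +
        if ((w.1, w.2 + 1, 0) : Edge L) = j0 L then -halfAnticomm A else 0 :=
    sq_mul_mul_mul_eq_one_add_ite (Ze_commute A hcomm) (Ze_sq A hsq) (boundary_nodup w)
      (vertical_ne_j0 _ _) (vertical_ne_j0 _ _)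
  have h₁ : ∑ w : ZMod L × ZMod L,
      (if ((w.1, w.2, 0) : Edge L) = j0 L then -halfAnticomm A else 0) = -halfAnticomm A :=
    Fintype.sum_ite_eq_of_injective (v := (0, 0))
      (fun w w' h => by simpa [Prod.ext_iff] using h) rfl _
  have h₂ : ∑ w : ZMod L × ZMod L,
      (if ((w.1, w.2 + 1, 0) : Edge L) = j0 L then -halfAnticomm A else 0) = -halfAnticomm A :=
    Fintype.sum_ite_eq_of_injective (v := (0, -1))
      (fun w w' h => by simpa [Prod.ext_iff] using h) (by simp [j0]) _
  rw [Finset.sum_congr rfl fun w _ => hSp w, Finset.sum_add_distrib, Finset.sum_add_distrib,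
    h₁, h₂, Finset.sum_const, Finset.card_univ, card_vertices]
  abel

end Torus

/-- for self-adjoint dichotomic observables commuting across different edges of
the `L × L` torus (`L ≥ 2`), the toric-code Bell operator admits the sum-of-squares
decomposition `2L² • id − B = ½ ∑_w (id − S'_v(w))² + ½ ∑_f (id − S'_p(f))²`, and consequently
`re⟪φ, B φ⟫ ≤ 2L² ‖φ‖²` for every `φ`: the maximal quantum value of `I_N^tor` is `N = 2L²`. -/
theorem toric_sos_and_quantum_bound [NeZero L] (hL : 2 ≤ L)
    (A : Edge L → Fin 2 → Module.End ℂ H)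
    (hsa : ∀ e x (u v : H), ⟪A e x u, v⟫_ℂ = ⟪u, A e x v⟫_ℂ)
    (hsq : ∀ e x, A e x * A e x = 1)
    (hcomm : ∀ e e' x y, e ≠ e' → A e x * A e' y = A e' y * A e x) :
    (((2 * L ^ 2 : ℕ) : ℂ) • (1 : Module.End ℂ H) - Bell A =
      (2 : ℂ)⁻¹ • (∑ w : ZMod L × ZMod L, (1 - Sv A w) ^ 2) +
        (2 : ℂ)⁻¹ • ∑ w : ZMod L × ZMod L, (1 - Sp A w) ^ 2) ∧
    ∀ φ : H, (⟪φ, Bell A φ⟫_ℂ).re ≤ 2 * (L : ℝ) ^ 2 * ‖φ‖ ^ 2 := by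
  have : Fact (1 < L) := ⟨hL⟩
  have hsos : ((2 * L ^ 2 : ℕ) : ℂ) • (1 : Module.End ℂ H) - Bell A =
      (2 : ℂ)⁻¹ • (∑ w : ZMod L × ZMod L, (1 - Sv A w) ^ 2) +
        (2 : ℂ)⁻¹ • ∑ w : ZMod L × ZMod L, (1 - Sp A w) ^ 2 := by
    rw [Bell, Fintype.sum_one_sub_sq, Fintype.sum_one_sub_sq, sum_Sv_sq A hcomm hsq,
      sum_Sp_sq A hcomm hsq, card_vertices]
    module
  refine ⟨hsos, fun φ => ?_⟩
  have hpos : (((2 * (L : ℝ) ^ 2 : ℝ) : ℂ) • 1 - Bell A).IsPositive := by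
    rw [show ((2 * (L : ℝ) ^ 2 : ℝ) : ℂ) = ((2 * L ^ 2 : ℕ) : ℂ) by push_cast; ring, hsos]
    open scoped ComplexOrder in
    exact ((LinearMap.isPositive_sum_one_sub_sq _ (isSymmetric_Sv A hcomm hsa)).smul_of_nonneg
      (inv_nonneg.mpr zero_le_two)).add
      ((LinearMap.isPositive_sum_one_sub_sq _ (isSymmetric_Sp A hcomm hsa)).smul_of_nonneg
      (inv_nonneg.mpr zero_le_two))
  exact hpos.re_inner_le φ

end ToricBell
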